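/- Let s ≥ 1, m > 3, T > 0 and define ρ(t) = s^{1/2 − 1/m}·λ·e^{−sφ*(t)}·(ξ*(t))^{1/2 − 1/m} on (0,T), where ξ*(t) = A/(t^m(T−t)^m) for a constant A ≥ 1 and φ*(t) = K·ξ*(t)/A for a constant K > 0 with K ≥ 1. Then ρ extends continuously by 0 to t = 0 and t = T, and there is a constant C(m,K,A) such that |ρ'(t)| ≤ C·T·s^{3/2 − 1/m}·λ·e^{−sφ*(t)}·(ξ*(t))^{3/2} for all t ∈ (0,T), provided s ≥ C·T^m. -/

import Mathlib

/-!
Write `u = t (T - t)`, so that `ξ* = A u⁻ᵐ` on `(0, T)`. Since `u' = T - 2t` and `A ≥ 1`,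
`|ξ*'| = m A |T - 2t| u^{-m-1} ≤ m T (ξ*)^{1+1/m}`. The weight is
`c e^{-bξ*} (ξ*)^p` with `p = 1/2 - 1/m` and `b = sK/A`, whose derivative is
`c e^{-bξ*} (p (ξ*)^{p-1} - b (ξ*)^p) ξ*'`; inserting the bound on `ξ*'` produces the powers
`(ξ*)^{1/2}` and `(ξ*)^{3/2}`, and the first is absorbed into the second because
`ξ* ≥ T^{-2m}` on `(0, T)`; with `p ≤ 1 ≤ s` this gives `C = m (T^{2m} + K)`.
At the endpoints `ξ* → ∞`, and `x^p e^{-bx} → 0`.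
-/

open Real Set Filter Topology

theorem tendsto_mul_exp_neg_mul_mul_rpow {α : Type*} {l : Filter α} {f : α → ℝ} {b : ℝ}
    (hb : 0 < b) (hf : Tendsto f l atTop) (c p : ℝ) :
    Tendsto (fun x => c * exp (-(b * f x)) * f x ^ p) l (𝓝 0) := by
  have h := ((tendsto_rpow_mul_exp_neg_mul_atTop_nhds_zero p b hb).comp hf).const_mul c
  rw [mul_zero] at h
  refine h.congr fun x => ?_
  simp only [Function.comp_apply, neg_mul]
  ring

theorem HasDerivAt.mul_exp_neg_mul_mul_rpow {f : ℝ → ℝ} {f' t : ℝ} (hf : HasDerivAt f f' t)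
    (hft : 0 < f t) (c b p : ℝ) :
    HasDerivAt (fun x => c * Real.exp (-(b * f x)) * f x ^ p)
      (c * Real.exp (-(b * f t)) * (p * f t ^ (p - 1) - b * f t ^ p) * f') t := by
  refine (((hf.const_mul b).fun_neg.exp.const_mul c).fun_mul
    (hf.rpow_const (p := p) (Or.inl hft.ne'))).congr_deriv ?_
  ring

theorem abs_mul_sub_rpow_mul_le {c b p q y f' L M : ℝ} (hc : 0 ≤ c) (hb : 0 ≤ b)
    (hp : 0 ≤ p) (hy : 0 < y) (hf' : |f'| ≤ L * y ^ q) (hM : 1 ≤ M * y) :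
    |c * (p * y ^ (p - 1) - b * y ^ p) * f'| ≤ c * L * (p * M + b) * y ^ (p + q) := by
  have hL : 0 ≤ L := nonneg_of_mul_nonneg_left ((abs_nonneg _).trans hf') (by positivity)
  have h1 : 0 ≤ p * y ^ (p - 1) := by positivity
  have h2 : 0 ≤ b * y ^ p := by positivity
  have hy' : y ^ (p + q - 1) ≤ M * y ^ (p + q) := by
    rw [rpow_sub hy, rpow_one, div_le_iff₀ hy]
    nlinarith [rpow_pos_of_pos hy (p + q)]
  calc |c * (p * y ^ (p - 1) - b * y ^ p) * f'|
      = c * |p * y ^ (p - 1) - b * y ^ p| * |f'| := by rw [abs_mul, abs_mul, abs_of_nonneg hc]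
    _ ≤ c * (p * y ^ (p - 1) + b * y ^ p) * (L * y ^ q) := by
      gcongr
      exact abs_le.2 ⟨by linarith, by linarith⟩
    _ = c * L * (p * y ^ (p + q - 1) + b * y ^ (p + q)) := by
      rw [rpow_sub hy, rpow_sub hy, rpow_add hy, rpow_one]
      field_simp
    _ ≤ c * L * (p * (M * y ^ (p + q)) + b * y ^ (p + q)) := by gcongr
    _ = c * L * (p * M + b) * y ^ (p + q) := by ring

noncomputable def xiStar (T A m t : ℝ) : ℝ := A / (t ^ m * (T - t) ^ m)

section xiStar

variable {T A m t : ℝ}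

theorem xiStar_eq_of_mem_Ioo (ht : t ∈ Ioo 0 T) : xiStar T A m t = A * (t * (T - t)) ^ (-m) := by
  have hu : 0 < t * (T - t) := mul_pos ht.1 (sub_pos.2 ht.2)
  rw [xiStar, ← mul_rpow ht.1.le (sub_pos.2 ht.2).le, rpow_neg hu.le, div_eq_mul_inv]

theorem xiStar_pos (hA : 0 < A) (ht : t ∈ Ioo 0 T) : 0 < xiStar T A m t :=
  div_pos hA (mul_pos (rpow_pos_of_pos ht.1 m) (rpow_pos_of_pos (sub_pos.2 ht.2) m))

theorem tendsto_xiStar_nhdsWithin_Ioo (hA : 0 < A) (hm : 0 < m) {a : ℝ} (ha : a = 0 ∨ a = T) :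
    Tendsto (xiStar T A m) (𝓝[Ioo 0 T] a) atTop := by
  have hden : Tendsto (fun t => t ^ m * (T - t) ^ m) (𝓝[Ioo 0 T] a) (𝓝[>] 0) := by
    refine tendsto_nhdsWithin_of_tendsto_nhds_of_eventually_within _ ?_ ?_
    · have hcont : Continuous fun t : ℝ => t ^ m * (T - t) ^ m :=
        ((continuous_rpow_const hm.le).mul
          ((continuous_rpow_const hm.le).comp (continuous_const.sub continuous_id)))
      have h0 : a ^ m * (T - a) ^ m = 0 := by rcases ha with rfl | rfl <;> simp [zero_rpow hm.ne']
      simpa [h0] using (hcont.tendsto a).mono_left nhdsWithin_le_nhds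
    · exact eventually_nhdsWithin_of_forall fun t ht =>
        mul_pos (rpow_pos_of_pos ht.1 m) (rpow_pos_of_pos (sub_pos.2 ht.2) m)
  refine ((tendsto_inv_nhdsGT_zero.comp hden).const_mul_atTop hA).congr fun t => ?_
  rw [xiStar, div_eq_mul_inv, Function.comp_apply]

theorem hasDerivAt_xiStar (ht : t ∈ Ioo 0 T) :
    HasDerivAt (xiStar T A m) (-(m * A * (T - 2 * t) * (t * (T - t)) ^ (-m - 1))) t := by
  have hu : 0 < t * (T - t) := mul_pos ht.1 (sub_pos.2 ht.2)
  have h := (((hasDerivAt_id' t).fun_mul ((hasDerivAt_id' t).const_sub T)).rpow_const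
    (p := -m) (Or.inl hu.ne')).const_mul A
  refine (h.congr_of_eventuallyEq ?_).congr_deriv ?_
  · filter_upwards [Ioo_mem_nhds ht.1 ht.2] with x hx using xiStar_eq_of_mem_Ioo hx
  · ring

theorem abs_deriv_xiStar_le (hA : 1 ≤ A) (hm : 0 < m) (ht : t ∈ Ioo 0 T) :
    |deriv (xiStar T A m) t| ≤ m * T * xiStar T A m t ^ (1 + 1 / m) := by
  have hu : 0 < t * (T - t) := mul_pos ht.1 (sub_pos.2 ht.2)
  have hpow : xiStar T A m t ^ (1 + 1 / m) = A ^ (1 + 1 / m) * (t * (T - t)) ^ (-m - 1) := by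
    rw [xiStar_eq_of_mem_Ioo ht, mul_rpow (by linarith) (rpow_nonneg hu.le _), ← rpow_mul hu.le]
    congr 2
    field_simp
    ring
  have hA' : A ≤ A ^ (1 + 1 / m) := calc
    A = A ^ (1 : ℝ) := (rpow_one A).symm
    _ ≤ A ^ (1 + 1 / m) := rpow_le_rpow_of_exponent_le hA (by simp [hm.le])
  have h2t : |T - 2 * t| ≤ T := abs_le.2 ⟨by linarith [ht.2], by linarith [ht.1]⟩
  rw [(hasDerivAt_xiStar ht).deriv, hpow, abs_neg, abs_mul, abs_mul, abs_mul, abs_of_pos hm,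
    abs_of_pos (by linarith : 0 < A), abs_of_pos (rpow_pos_of_pos hu _)]
  calc m * A * |T - 2 * t| * (t * (T - t)) ^ (-m - 1)
      ≤ m * A ^ (1 + 1 / m) * T * (t * (T - t)) ^ (-m - 1) := by gcongr
    _ = m * T * (A ^ (1 + 1 / m) * (t * (T - t)) ^ (-m - 1)) := by ring

theorem one_le_rpow_mul_xiStar (hA : 1 ≤ A) (hm : 0 < m) (ht : t ∈ Ioo 0 T) :
    1 ≤ T ^ (2 * m) * xiStar T A m t := by
  have hu : 0 < t * (T - t) := mul_pos ht.1 (sub_pos.2 ht.2)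
  have hle : (t * (T - t)) ^ m ≤ T ^ (2 * m) := by
    rw [rpow_mul (by linarith [ht.1, ht.2]), rpow_two]
    refine rpow_le_rpow hu.le ?_ hm.le
    nlinarith [ht.1, ht.2]
  rw [xiStar, ← mul_rpow ht.1.le (sub_pos.2 ht.2).le, mul_div,
    le_div_iff₀ (rpow_pos_of_pos hu _)]
  nlinarith [rpow_pos_of_pos hu m]

theorem abs_deriv_weight_xiStar_le {b c : ℝ} (hA : 1 ≤ A) (hm : 2 ≤ m) (hc : 0 ≤ c)
    (hb : 0 ≤ b) (ht : t ∈ Ioo 0 T) :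
    |deriv (fun x => c * exp (-(b * xiStar T A m x)) * xiStar T A m x ^ (1 / 2 - 1 / m)) t| ≤
      c * exp (-(b * xiStar T A m t)) * (m * T) * ((1 / 2 - 1 / m) * T ^ (2 * m) + b) *
        xiStar T A m t ^ (3 / 2 : ℝ) := by
  have hm0 : 0 < m := by linarith
  have hξ : 0 < xiStar T A m t := xiStar_pos (by linarith) ht
  have hp : 0 ≤ 1 / 2 - 1 / m := sub_nonneg.2 (one_div_le_one_div_of_le two_pos hm)
  rw [((hasDerivAt_xiStar ht).differentiableAt.hasDerivAt.mul_exp_neg_mul_mul_rpow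
    hξ _ _ _).deriv]
  have h := abs_mul_sub_rpow_mul_le (c := c * exp (-(b * xiStar T A m t))) (by positivity) hb hp hξ
    (abs_deriv_xiStar_le hA hm0 ht) (one_le_rpow_mul_xiStar hA hm0 ht)
  rwa [show 1 / 2 - 1 / m + (1 + 1 / m) = (3 / 2 : ℝ) by ring] at h

end xiStar

/-- Derivative estimate on the auxiliary weight
`ρ(t) = s^{1/2−1/m}·λ·e^{−sφ*(t)}·(ξ*(t))^{1/2−1/m}` with `ξ*(t) = A/(tᵐ(T−t)ᵐ)`,
`φ* = K·ξ*/A`: `ρ` extends continuously by `0` to the endpoints, and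
`|ρ'(t)| ≤ C·T·s^{3/2−1/m}·λ·e^{−sφ*(t)}·(ξ*(t))^{3/2}` provided `s ≥ C·Tᵐ`. -/
theorem auxiliary_weight_derivative_bound
    (T A K m : ℝ) (hT : 0 < T) (hA : 1 ≤ A) (hK : 1 ≤ K) (hm : 3 < m) :
    ∃ C : ℝ, 0 < C ∧
      ∀ s lam : ℝ, 1 ≤ s → 0 < lam → C * T ^ m ≤ s →
        ∀ ξs φs ρ : ℝ → ℝ,
          (∀ t, ξs t = A / (t ^ m * (T - t) ^ m)) →
          (∀ t, φs t = K * ξs t / A) →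
          (∀ t, ρ t = s ^ ((1:ℝ) / 2 - 1 / m) * lam * Real.exp (-(s * φs t)) *
            ξs t ^ ((1:ℝ) / 2 - 1 / m)) →
          Tendsto ρ (nhdsWithin 0 (Ioi 0)) (nhds 0) ∧
          Tendsto ρ (nhdsWithin T (Iio T)) (nhds 0) ∧
          (∀ t ∈ Ioo (0:ℝ) T,
            |deriv ρ t| ≤ C * T * s ^ ((3:ℝ) / 2 - 1 / m) * lam *
              Real.exp (-(s * φs t)) * ξs t ^ ((3:ℝ) / 2)) := by
  have hm0 : 0 < m := by linarith
  have hA0 : 0 < A := by linarith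
  refine ⟨m * (T ^ (2 * m) + K), by positivity, ?_⟩
  intro s lam hs hlam _ ξs φs ρ hξ hφ hρ
  obtain rfl : ξs = xiStar T A m := funext hξ
  have hb : 0 < s * K / A := by positivity
  have hsφ : ∀ t, s * φs t = s * K / A * xiStar T A m t := fun t => by rw [hφ]; ring
  obtain rfl : ρ = fun t => s ^ (1 / 2 - 1 / m) * lam * exp (-(s * K / A * xiStar T A m t)) *
      xiStar T A m t ^ (1 / 2 - 1 / m) := funext fun t => by rw [hρ, hsφ]
  refine ⟨?_, ?_, fun t ht => ?_⟩
  · rw [← nhdsWithin_Ioo_eq_nhdsGT hT]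
    exact tendsto_mul_exp_neg_mul_mul_rpow hb (tendsto_xiStar_nhdsWithin_Ioo hA0 hm0 (.inl rfl)) _ _
  · rw [← nhdsWithin_Ioo_eq_nhdsLT hT]
    exact tendsto_mul_exp_neg_mul_mul_rpow hb (tendsto_xiStar_nhdsWithin_Ioo hA0 hm0 (.inr rfl)) _ _
  · have hcoef : (1 / 2 - 1 / m) * T ^ (2 * m) + s * K / A ≤ s * (T ^ (2 * m) + K) := by
      have := mul_le_mul_of_nonneg_right (show 1 / 2 - 1 / m ≤ s by linarith [one_div_pos.2 hm0])
        (rpow_nonneg hT.le (2 * m))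
      have := div_le_self (by positivity : 0 ≤ s * K) hA
      linarith
    rw [hsφ, show (3 : ℝ) / 2 - 1 / m = 1 + (1 / 2 - 1 / m) by ring, rpow_add (by linarith),
      rpow_one]
    refine (abs_deriv_weight_xiStar_le hA (by linarith) (by positivity) hb.le ht).trans ?_
    calc _ ≤ s ^ (1 / 2 - 1 / m) * lam * exp (-(s * K / A * xiStar T A m t)) * (m * T) *
          (s * (T ^ (2 * m) + K)) * xiStar T A m t ^ ((3 : ℝ) / 2) := by
          gcongr
          exact rpow_nonneg (xiStar_pos hA0 ht).le _
      _ = _ := by ring
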